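/- arXiv:1309.7152 — 2 statements merged into one kernel-verified Lean document; each statement's English description precedes it below -/
import Mathlib

section
/- Let u^δ(x) = |x| - 1/2 on (-1,1), 0 < λ₁ < 1/8, and let v be the truncated function v(x) = √(2λ₁) - 1/2 for |x| ≤ √(2λ₁), v(x) = u^δ(x) for √(2λ₁) < |x| ≤ 1 - √(2λ₁), and v(x) = 1/2 - √(2λ₁) for |x| > 1 - √(2λ₁). Then the second antiderivative of v* = v - u^δ satisfies |σ^2[v*](0)| = λ₁(1 - (2/3)√(2λ₁)), and this equals ‖σ^2[v*]‖_{L^∞}. -/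
open MeasureTheory Set

/-- First primitive vanishing at `-1`. -/
noncomputable def sig1 (f : ℝ → ℝ) (x : ℝ) : ℝ := ∫ t in (-1 : ℝ)..x, f t

/-- Second primitive vanishing at `-1`. -/
noncomputable def sig2 (f : ℝ → ℝ) (x : ℝ) : ℝ := ∫ t in (-1 : ℝ)..x, sig1 f t

/-- Truncation of `u^δ(x) = |x| - 1/2` at level `√(2λ₁)`. -/
noncomputable def vTrunc (l1 : ℝ) (x : ℝ) : ℝ :=
  if |x| ≤ Real.sqrt (2 * l1) then Real.sqrt (2 * l1) - 1 / 2
  else if |x| ≤ 1 - Real.sqrt (2 * l1) then |x| - 1 / 2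
  else 1 / 2 - Real.sqrt (2 * l1)

/-- The difference `v - u^δ` written as a difference of two tent functions. -/
noncomputable def wfun (s x : ℝ) : ℝ := max 0 (s - |x|) - max 0 (|x| - (1 - s))

lemma wfun_cont (s : ℝ) : Continuous (wfun s) := by
  unfold wfun; fun_prop

lemma wfun_even (s x : ℝ) : wfun s (-x) = wfun s x := by simp [wfun]

lemma int_nonpos {f : ℝ → ℝ} {a b : ℝ} (hab : a ≤ b) (hf : ∀ u ∈ Icc a b, f u ≤ 0) :
    ∫ u in a..b, f u ≤ 0 := by
  have h : 0 ≤ ∫ u in a..b, -f u := intervalIntegral.integral_nonneg hab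
    (fun u hu => neg_nonneg.2 (hf u hu))
  rw [intervalIntegral.integral_neg] at h; linarith

lemma lin_int (c a b : ℝ) : ∫ t in a..b, (c + t) = c * (b - a) + (b ^ 2 - a ^ 2) / 2 := by
  rw [intervalIntegral.integral_add intervalIntegrable_const
    intervalIntegral.intervalIntegrable_id, integral_id]
  simp [mul_comm]

lemma quad_int (c d a b : ℝ) :
    ∫ t in a..b, (c * t + d * t ^ 2) = c * (b ^ 2 - a ^ 2) / 2 + d * (b ^ 3 - a ^ 3) / 3 := by
  have h1 : IntervalIntegrable (fun t : ℝ => c * t) volume a b := by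
    apply Continuous.intervalIntegrable; fun_prop
  have h2 : IntervalIntegrable (fun t : ℝ => d * t ^ 2) volume a b := by
    apply Continuous.intervalIntegrable; fun_prop
  rw [intervalIntegral.integral_add h1 h2, intervalIntegral.integral_const_mul,
    intervalIntegral.integral_const_mul, integral_id, integral_pow]
  norm_num; ring

set_option maxHeartbeats 1000000 in
/-- For the truncated function `v` and `v* = v - u^δ`, the second primitive satisfies
`|σ²[v*](0)| = λ₁(1 - (2/3)√(2λ₁))`, and this is the sup norm of `σ²[v*]` on `(-1,1)`. -/
theorem sig2_vTrunc_sub (l1 : ℝ) (hl1 : 0 < l1) (hl1' : l1 < 1 / 8) :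
    |sig2 (fun x => vTrunc l1 x - (|x| - 1 / 2)) 0| =
        l1 * (1 - (2 / 3) * Real.sqrt (2 * l1)) ∧
      IsGreatest {y : ℝ | ∃ x ∈ Ioo (-1 : ℝ) 1,
          y = |sig2 (fun t => vTrunc l1 t - (|t| - 1 / 2)) x|}
        (l1 * (1 - (2 / 3) * Real.sqrt (2 * l1))) := by
  set s : ℝ := Real.sqrt (2 * l1) with hs_def
  have hs0 : 0 < s := Real.sqrt_pos.2 (by linarith)
  have hs2 : s ^ 2 = 2 * l1 := Real.sq_sqrt (by linarith)
  have hshalf : s < 1 / 2 := by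
    nlinarith [hs0, hs2]
  -- the function equals `wfun s`
  have hfeq : (fun x => vTrunc l1 x - (|x| - 1 / 2)) = wfun s := by
    funext x
    have hax : 0 ≤ |x| := abs_nonneg x
    unfold vTrunc wfun
    rw [← hs_def]
    split_ifs with h1 h2
    · rw [max_eq_right (by linarith), max_eq_left (by linarith)]; ring
    · rw [max_eq_left (by linarith), max_eq_left (by linarith)]; ring
    · push_neg at h1 h2
      rw [max_eq_left (by linarith), max_eq_right (by linarith)]; ring
  -- basic facts about wfun
  have hwc : Continuous (wfun s) := wfun_cont s
  have hwi : ∀ a b : ℝ, IntervalIntegrable (wfun s) volume a b :=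
    fun a b => hwc.intervalIntegrable a b
  have hw1 : ∀ t ∈ Icc (-1 : ℝ) (s - 1), wfun s t = 1 - s + t := by
    intro t ht
    have habs : |t| = -t := abs_of_nonpos (by linarith [ht.2])
    unfold wfun
    rw [habs, max_eq_left (by linarith [ht.1, ht.2, hshalf]),
      max_eq_right (by linarith [ht.1, ht.2, hshalf])]
    ring
  have hw2 : ∀ t ∈ Icc (s - 1) (-s), wfun s t = 0 := by
    intro t ht
    have habs : |t| = -t := abs_of_nonpos (by linarith [ht.2, hs0])
    unfold wfun
    rw [habs, max_eq_left (by linarith [ht.1, ht.2, hs0, hshalf]),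
      max_eq_left (by linarith [ht.1, ht.2, hs0, hshalf])]
    ring
  have hw3 : ∀ t ∈ Icc (-s) (0 : ℝ), wfun s t = s + t := by
    intro t ht
    have habs : |t| = -t := abs_of_nonpos ht.2
    unfold wfun
    rw [habs, max_eq_right (by linarith [ht.1, ht.2, hshalf]),
      max_eq_left (by linarith [ht.1, ht.2, hshalf])]
    ring
  -- piecewise integrals on [-1, 0]
  have hle1 : (-1 : ℝ) ≤ s - 1 := by linarith
  have hle2 : s - 1 ≤ -s := by linarith
  have hle3 : (-s : ℝ) ≤ 0 := by linarith
  have ia : ∫ t in (-1 : ℝ)..(s - 1), wfun s t = -(s ^ 2) / 2 := by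
    rw [intervalIntegral.integral_congr (g := fun t => 1 - s + t)
      (by rw [uIcc_of_le hle1]; exact hw1), lin_int]
    ring
  have ib : ∫ t in (s - 1)..(-s), wfun s t = 0 := by
    rw [intervalIntegral.integral_congr (g := fun _ => (0 : ℝ))
      (by rw [uIcc_of_le hle2]; exact hw2)]
    simp
  have ic : ∫ t in (-s)..(0 : ℝ), wfun s t = s ^ 2 / 2 := by
    rw [intervalIntegral.integral_congr (g := fun t => s + t)
      (by rw [uIcc_of_le hle3]; exact hw3), lin_int]
    ring
  have hI1 : ∫ t in (-1 : ℝ)..0, wfun s t = 0 := by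
    rw [← intervalIntegral.integral_add_adjacent_intervals (hwi (-1) (-s)) (hwi (-s) 0),
      ← intervalIntegral.integral_add_adjacent_intervals (hwi (-1) (s - 1)) (hwi (s - 1) (-s)),
      ia, ib, ic]
    ring
  -- ∫ t * w on [-1,0]
  have hmi : ∀ a b : ℝ, IntervalIntegrable (fun t => wfun s t * t) volume a b :=
    fun a b => (hwc.mul continuous_id).intervalIntegrable a b
  have ja : ∫ t in (-1 : ℝ)..(s - 1), wfun s t * t = s ^ 2 / 2 - s ^ 3 / 6 := by
    rw [intervalIntegral.integral_congr (g := fun t => (1 - s) * t + 1 * t ^ 2)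
      (by rw [uIcc_of_le hle1]; intro t ht
          show wfun s t * t = (1 - s) * t + 1 * t ^ 2
          rw [hw1 t ht]; ring), quad_int]
    ring
  have jb : ∫ t in (s - 1)..(-s), wfun s t * t = 0 := by
    rw [intervalIntegral.integral_congr (g := fun _ => (0 : ℝ))
      (by rw [uIcc_of_le hle2]; intro t ht
          show wfun s t * t = 0
          rw [hw2 t ht]; ring)]
    simp
  have jc : ∫ t in (-s)..(0 : ℝ), wfun s t * t = -(s ^ 3) / 6 := by
    rw [intervalIntegral.integral_congr (g := fun t => s * t + 1 * t ^ 2)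
      (by rw [uIcc_of_le hle3]; intro t ht
          show wfun s t * t = s * t + 1 * t ^ 2
          rw [hw3 t ht]; ring), quad_int]
    ring
  have hJ : ∫ t in (-1 : ℝ)..0, wfun s t * t = s ^ 2 / 2 - s ^ 3 / 3 := by
    rw [← intervalIntegral.integral_add_adjacent_intervals (hmi (-1) (-s)) (hmi (-s) 0),
      ← intervalIntegral.integral_add_adjacent_intervals (hmi (-1) (s - 1)) (hmi (s - 1) (-s)),
      ja, jb, jc]
    ring
  -- derivative and continuity of sig1
  have hderiv : ∀ x : ℝ, HasDerivAt (sig1 (wfun s)) (wfun s x) x := by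
    intro x
    exact intervalIntegral.integral_hasDerivAt_right (hwi (-1) x)
      (hwc.stronglyMeasurableAtFilter _ _) hwc.continuousAt
  have hs1c : Continuous (sig1 (wfun s)) :=
    continuous_iff_continuousAt.2 fun x => (hderiv x).continuousAt
  have hs1i : ∀ a b : ℝ, IntervalIntegrable (sig1 (wfun s)) volume a b :=
    fun a b => hs1c.intervalIntegrable a b
  have hsig1_0 : sig1 (wfun s) 0 = 0 := hI1
  have hI01 : ∫ t in (0 : ℝ)..1, wfun s t = 0 := by
    have h := intervalIntegral.integral_comp_neg (a := (0 : ℝ)) (b := 1) (wfun s)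
    simp only [wfun_even, neg_zero] at h
    rw [h]; exact hI1
  have hsig1_1 : sig1 (wfun s) 1 = 0 := by
    have := intervalIntegral.integral_add_adjacent_intervals (hwi (-1) 0) (hwi 0 1)
    unfold sig1
    rw [← this, hI1, hI01]; ring
  -- oddness of sig1
  have hodd : ∀ x : ℝ, sig1 (wfun s) (-x) = -sig1 (wfun s) x := by
    intro x
    have h1 := intervalIntegral.integral_add_adjacent_intervals (hwi (-1) (-x)) (hwi (-x) 1)
    have h2 : ∫ t in (-x)..1, wfun s t = sig1 (wfun s) x := by
      have h := intervalIntegral.integral_comp_neg (a := (-1 : ℝ)) (b := x) (wfun s)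
      simp only [wfun_even, neg_neg] at h
      rw [← h]; rfl
    have h3 : (∫ t in (-1 : ℝ)..1, wfun s t) = 0 := by
      rw [← intervalIntegral.integral_add_adjacent_intervals (hwi (-1) 0) (hwi 0 1), hI1, hI01]
      ring
    have e1 : sig1 (wfun s) (-x) = ∫ t in (-1 : ℝ)..(-x), wfun s t := rfl
    rw [h3] at h1
    have : sig1 (wfun s) (-x) + sig1 (wfun s) x = 0 := by
      rw [e1, ← h2]; linarith [h1]
    linarith
  -- signs of wfun
  have hwneg : ∀ t : ℝ, s ≤ |t| → wfun s t ≤ 0 := by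
    intro t ht
    unfold wfun
    have h1 : max 0 (s - |t|) = 0 := max_eq_left (by linarith)
    have h2 := le_max_left (0 : ℝ) (|t| - (1 - s))
    rw [h1]; linarith
  have hwpos : ∀ t : ℝ, |t| ≤ 1 - s → 0 ≤ wfun s t := by
    intro t ht
    unfold wfun
    have h1 : max 0 (|t| - (1 - s)) = 0 := max_eq_left (by linarith)
    have h2 := le_max_left (0 : ℝ) (s - |t|)
    rw [h1]; linarith
  -- sign of sig1 on [-1,0] and [0,1]
  have hs1neg : ∀ x ∈ Icc (-1 : ℝ) 0, sig1 (wfun s) x ≤ 0 := by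
    intro x hx
    rcases le_or_gt x (-s) with h | h
    · apply int_nonpos hx.1
      intro u hu
      apply hwneg
      rw [abs_of_nonpos (by linarith [hu.2, hs0])]
      linarith [hu.2]
    · have hsum := intervalIntegral.integral_add_adjacent_intervals (hwi (-1) x) (hwi x 0)
      rw [hI1] at hsum
      have hnn : 0 ≤ ∫ t in x..(0 : ℝ), wfun s t := by
        apply intervalIntegral.integral_nonneg hx.2
        intro u hu
        apply hwpos
        rw [abs_of_nonpos hu.2]
        linarith [hu.1, hshalf]
      show (∫ t in (-1 : ℝ)..x, wfun s t) ≤ 0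
      linarith
  have hs1pos : ∀ x ∈ Icc (0 : ℝ) 1, 0 ≤ sig1 (wfun s) x := by
    intro x hx
    have h := hodd (-x)
    rw [neg_neg] at h
    have := hs1neg (-x) ⟨by linarith [hx.2], by linarith [hx.1]⟩
    linarith [h, this]
  -- value of sig2 at 0, via integration by parts
  have hibp := intervalIntegral.integral_mul_deriv_eq_deriv_mul
    (u := sig1 (wfun s)) (u' := wfun s) (v := fun t => t) (v' := fun _ => (1 : ℝ))
    (a := (-1 : ℝ)) (b := 0)
    (fun x _ => hderiv x) (fun x _ => hasDerivAt_id' x) (hwi (-1) 0) intervalIntegrable_const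
  have hsig2_0 : sig2 (wfun s) 0 = -(s ^ 2) / 2 + s ^ 3 / 3 := by
    have hsame : sig1 (wfun s) (-1) = 0 := intervalIntegral.integral_same
    simp only [mul_one, hsig1_0, hsame] at hibp
    unfold sig2
    rw [hibp, hJ]; ring
  -- value of sig2 at 1
  have hsig2_1 : sig2 (wfun s) 1 = 0 := by
    have hadj := intervalIntegral.integral_add_adjacent_intervals (hs1i (-1) 0) (hs1i 0 1)
    have h := intervalIntegral.integral_comp_neg (a := (0 : ℝ)) (b := 1) (sig1 (wfun s))
    simp only [hodd, neg_zero, intervalIntegral.integral_neg] at h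
    -- h : -∫ t in 0..1, sig1 w t = ∫ t in -1..0, sig1 w t
    unfold sig2
    rw [← hadj]
    have : (∫ t in (0 : ℝ)..1, sig1 (wfun s) t) = -∫ t in (-1 : ℝ)..0, sig1 (wfun s) t := by
      linarith [h]
    rw [this]; ring
  -- global bound for sig2 on [-1,1]
  have hbound : ∀ x ∈ Icc (-1 : ℝ) 1, sig2 (wfun s) 0 ≤ sig2 (wfun s) x ∧ sig2 (wfun s) x ≤ 0 := by
    intro x hx
    rcases le_or_gt x 0 with h | h
    · have hadj := intervalIntegral.integral_add_adjacent_intervals (hs1i (-1) x) (hs1i x 0)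
      have hnp : (∫ t in x..(0 : ℝ), sig1 (wfun s) t) ≤ 0 :=
        int_nonpos h (fun u hu => hs1neg u ⟨by linarith [hu.1, hx.1], hu.2⟩)
      constructor
      · show sig2 (wfun s) 0 ≤ ∫ t in (-1 : ℝ)..x, sig1 (wfun s) t
        unfold sig2
        linarith [hadj]
      · exact int_nonpos hx.1 (fun u hu => hs1neg u ⟨hu.1, by linarith [hu.2]⟩)
    · have hadj := intervalIntegral.integral_add_adjacent_intervals (hs1i (-1) 0) (hs1i 0 x)
      have hadj2 := intervalIntegral.integral_add_adjacent_intervals (hs1i (-1) x) (hs1i x 1)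
      have hnn : 0 ≤ ∫ t in (0 : ℝ)..x, sig1 (wfun s) t :=
        intervalIntegral.integral_nonneg h.le
          (fun u hu => hs1pos u ⟨hu.1, by linarith [hu.2, hx.2]⟩)
      have hnn2 : 0 ≤ ∫ t in x..(1 : ℝ), sig1 (wfun s) t :=
        intervalIntegral.integral_nonneg hx.2
          (fun u hu => hs1pos u ⟨by linarith [hu.1], hu.2⟩)
      have h1 : sig2 (wfun s) 1 = sig2 (wfun s) x + ∫ t in x..(1 : ℝ), sig1 (wfun s) t := by
        unfold sig2; linarith [hadj2]
      have h0 : sig2 (wfun s) x = sig2 (wfun s) 0 + ∫ t in (0 : ℝ)..x, sig1 (wfun s) t := by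
        unfold sig2; linarith [hadj]
      rw [hsig2_1] at h1
      constructor
      · linarith
      · linarith
  -- the value as -M
  have hs3 : s ^ 3 = 2 * l1 * s := by
    have : s ^ 3 = s ^ 2 * s := by ring
    rw [this, hs2]
  have hMval : sig2 (wfun s) 0 = -(l1 * (1 - (2 / 3) * s)) := by
    rw [hsig2_0]
    linarith [hs3, hs2]
  have hMpos : 0 ≤ l1 * (1 - (2 / 3) * s) := by nlinarith [hshalf, hs0]
  have habs0 : |sig2 (wfun s) 0| = l1 * (1 - (2 / 3) * s) := by
    rw [hMval, abs_neg, abs_of_nonneg hMpos]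
  constructor
  · rw [hfeq]; exact habs0
  · constructor
    · exact ⟨0, ⟨by norm_num, by norm_num⟩, by rw [hfeq, habs0]⟩
    · rintro y ⟨x, hx, rfl⟩
      rw [hfeq]
      obtain ⟨hxl, hxu⟩ := hbound x ⟨hx.1.le, hx.2.le⟩
      rw [hMval] at hxl
      rw [abs_le]
      constructor <;> linarith
end

section
/- Let u^δ(x) = |x| - 1/2 on (-1,1), 0 < λ₁ < 1/8, and v the truncated function as above (constant √(2λ₁) - 1/2 on |x| ≤ √(2λ₁), equal to u^δ for √(2λ₁) < |x| ≤ 1 - √(2λ₁), constant 1/2 - √(2λ₁) beyond). Then ‖σ^1[v - u^δ]‖_{L^∞} = λ₁, attained at x = ±1/2. -/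
open MeasureTheory Set

lemma int_lin (a b c : ℝ) : ∫ t in a..b, (c + t) = c * (b - a) + (b ^ 2 - a ^ 2) / 2 := by
  rw [intervalIntegral.integral_add (intervalIntegrable_const)
    intervalIntegral.intervalIntegrable_id, intervalIntegral.integral_const,
    integral_id]
  simp [smul_eq_mul]; ring

lemma int_lin' (a b c : ℝ) : ∫ t in a..b, (c - t) = c * (b - a) - (b ^ 2 - a ^ 2) / 2 := by
  rw [intervalIntegral.integral_sub (intervalIntegrable_const)
    intervalIntegral.intervalIntegrable_id, intervalIntegral.integral_const,
    integral_id]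
  simp [smul_eq_mul]; ring

/-- For the truncated function `v`, `‖σ¹[v - u^δ]‖_∞ = λ₁`, attained at `x = ±1/2`. -/
theorem sig1_vTrunc_sub (l1 : ℝ) (hl1 : 0 < l1) (hl1' : l1 < 1 / 8) :
    IsGreatest {y : ℝ | ∃ x ∈ Ioo (-1 : ℝ) 1,
        y = |sig1 (fun t => vTrunc l1 t - (|t| - 1 / 2)) x|} l1 ∧
      |sig1 (fun t => vTrunc l1 t - (|t| - 1 / 2)) (1 / 2)| = l1 ∧
      |sig1 (fun t => vTrunc l1 t - (|t| - 1 / 2)) (-(1 / 2))| = l1 := by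
  set s := Real.sqrt (2 * l1) with hsdef
  have hs0 : 0 < s := Real.sqrt_pos.mpr (by linarith)
  have hssq : s ^ 2 = 2 * l1 := Real.sq_sqrt (by linarith)
  have hs12 : s < 1 / 2 := by nlinarith
  set g : ℝ → ℝ := fun t => vTrunc l1 t - (|t| - 1 / 2) with hgdef
  have hgeq : ∀ t, g t = max (s - |t|) 0 + min (1 - s - |t|) 0 := by
    intro t
    have h0 : (0:ℝ) ≤ |t| := abs_nonneg t
    simp only [hgdef, vTrunc, ← hsdef]
    split_ifs with h1 h2
    · rw [max_eq_left (by linarith), min_eq_right (by linarith)]; ring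
    · push_neg at h1
      rw [max_eq_right (by linarith), min_eq_right (by linarith)]; ring
    · push_neg at h1 h2
      rw [max_eq_right (by linarith), min_eq_left (by linarith)]; ring
  have hgc : Continuous g := by
    have : g = fun t => max (s - |t|) 0 + min (1 - s - |t|) 0 := funext hgeq
    rw [this]; fun_prop
  have hgint : ∀ a b : ℝ, IntervalIntegrable g volume a b :=
    fun a b => hgc.intervalIntegrable a b
  have hnonpos : ∀ a b : ℝ, a ≤ b → (∀ u ∈ Icc a b, g u ≤ 0) → (∫ t in a..b, g t) ≤ 0 := by
    intro a b hab h
    have := intervalIntegral.integral_mono_on hab (hgint a b) intervalIntegrable_const h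
    simpa using this
  set F : ℝ → ℝ := fun x => ∫ t in (-1:ℝ)..x, g t with hFdef
  -- g vanishes on the middle regions
  have hg0 : ∀ t : ℝ, s ≤ |t| → |t| ≤ 1 - s → g t = 0 := by
    intro t h1 h2
    rw [hgeq, max_eq_right (by linarith), min_eq_right (by linarith)]; ring
  -- sign lemmas
  have hgle : ∀ t : ℝ, s ≤ |t| → g t ≤ 0 := by
    intro t h1
    rw [hgeq, max_eq_right (by linarith)]
    have := min_le_right (1 - s - |t|) (0:ℝ); linarith
  have hgge : ∀ t : ℝ, |t| ≤ s → 0 ≤ g t := by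
    intro t h1
    rw [hgeq, min_eq_right (by linarith)]
    have := le_max_right (s - |t|) (0:ℝ); linarith
  -- explicit integrals
  have hA : ∫ t in (-1:ℝ)..(-1 + s), g t = -l1 := by
    rw [show (∫ t in (-1:ℝ)..(-1 + s), g t) = ∫ t in (-1:ℝ)..(-1 + s), ((1 - s) + t) from
      intervalIntegral.integral_congr ?_, int_lin]
    · nlinarith
    · intro t ht
      rw [Set.uIcc_of_le (by linarith)] at ht
      obtain ⟨h1, h2⟩ := ht
      have habs : |t| = -t := abs_of_nonpos (by linarith)
      rw [hgeq, habs, max_eq_right (by linarith), min_eq_left (by linarith)]; ring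
  have hBg : ∀ t : ℝ, -1 + s ≤ t → t ≤ -s → g t = 0 := by
    intro t h1 h2
    have habs : |t| = -t := abs_of_nonpos (by linarith)
    exact hg0 t (by rw [habs]; linarith) (by rw [habs]; linarith)
  have hB : ∀ x : ℝ, -1 + s ≤ x → x ≤ -s → (∫ t in (-1 + s : ℝ)..x, g t) = 0 := by
    intro x h hx
    rw [intervalIntegral.integral_congr (g := fun _ => (0:ℝ)) ?_, intervalIntegral.integral_const]
    · simp
    · intro t ht
      rw [Set.uIcc_of_le h] at ht
      exact hBg t ht.1 (le_trans ht.2 hx)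
  have hC : ∫ t in (-s:ℝ)..s, g t = 2 * l1 := by
    have hC1 : ∫ t in (-s:ℝ)..0, g t = l1 := by
      rw [show (∫ t in (-s:ℝ)..0, g t) = ∫ t in (-s:ℝ)..0, (s + t) from
        intervalIntegral.integral_congr ?_, int_lin]
      · nlinarith
      · intro t ht
        rw [Set.uIcc_of_le (by linarith)] at ht
        obtain ⟨h1, h2⟩ := ht
        have habs : |t| = -t := abs_of_nonpos h2
        rw [hgeq, habs, max_eq_left (by linarith), min_eq_right (by linarith)]; ring
    have hC2 : ∫ t in (0:ℝ)..s, g t = l1 := by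
      rw [show (∫ t in (0:ℝ)..s, g t) = ∫ t in (0:ℝ)..s, (s - t) from
        intervalIntegral.integral_congr ?_, int_lin']
      · nlinarith
      · intro t ht
        rw [Set.uIcc_of_le (by linarith)] at ht
        obtain ⟨h1, h2⟩ := ht
        have habs : |t| = t := abs_of_nonneg h1
        rw [hgeq, habs, max_eq_left (by linarith), min_eq_right (by linarith)]; ring
    rw [← intervalIntegral.integral_add_adjacent_intervals (hgint (-s) 0) (hgint 0 s), hC1, hC2]
    ring
  have hDg : ∀ t : ℝ, s ≤ t → t ≤ 1 - s → g t = 0 := by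
    intro t h1 h2
    have habs : |t| = t := abs_of_nonneg (by linarith)
    exact hg0 t (by rw [habs]; exact h1) (by rw [habs]; exact h2)
  have hD : ∀ x y : ℝ, s ≤ x → x ≤ y → y ≤ 1 - s → (∫ t in x..y, g t) = 0 := by
    intro x y hx hxy hy
    rw [intervalIntegral.integral_congr (g := fun _ => (0:ℝ)) ?_, intervalIntegral.integral_const]
    · simp
    · intro t ht
      rw [Set.uIcc_of_le hxy] at ht
      exact hDg t (le_trans hx ht.1) (le_trans ht.2 hy)
  have hE : ∫ t in (1 - s : ℝ)..1, g t = -l1 := by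
    rw [show (∫ t in (1 - s : ℝ)..1, g t) = ∫ t in (1 - s : ℝ)..1, ((1 - s) - t) from
      intervalIntegral.integral_congr ?_, int_lin']
    · nlinarith
    · intro t ht
      rw [Set.uIcc_of_le (by linarith)] at ht
      obtain ⟨h1, h2⟩ := ht
      have habs : |t| = t := abs_of_nonneg (by linarith)
      rw [hgeq, habs, max_eq_right (by linarith), min_eq_left (by linarith)]; ring
  -- values of F
  have hFval : ∀ x : ℝ, -1 + s ≤ x → x ≤ -s → F x = -l1 := by
    intro x h1 h2
    have : F x = (∫ t in (-1:ℝ)..(-1 + s), g t) + ∫ t in (-1 + s : ℝ)..x, g t :=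
      (intervalIntegral.integral_add_adjacent_intervals (hgint _ _) (hgint _ _)).symm
    rw [this, hA, hB x h1 h2]; ring
  have hFns : F (-s) = -l1 := hFval (-s) (by linarith) le_rfl
  have hFs : F s = l1 := by
    have : F s = F (-s) + ∫ t in (-s:ℝ)..s, g t :=
      (intervalIntegral.integral_add_adjacent_intervals (hgint _ _) (hgint _ _)).symm
    rw [this, hFns, hC]; ring
  have hFhalf : F (1 / 2) = l1 := by
    have : F (1 / 2) = F s + ∫ t in (s:ℝ)..(1/2), g t :=
      (intervalIntegral.integral_add_adjacent_intervals (hgint _ _) (hgint _ _)).symm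
    rw [this, hFs, hD s (1/2) le_rfl (by linarith) (by linarith)]; ring
  have hF1 : F 1 = 0 := by
    have h1 : F 1 = F s + ∫ t in (s:ℝ)..1, g t :=
      (intervalIntegral.integral_add_adjacent_intervals (hgint _ _) (hgint _ _)).symm
    have h2 : (∫ t in (s:ℝ)..1, g t) = (∫ t in (s:ℝ)..(1-s), g t) + ∫ t in (1-s:ℝ)..1, g t :=
      (intervalIntegral.integral_add_adjacent_intervals (hgint _ _) (hgint _ _)).symm
    rw [h1, h2, hFs, hD s (1-s) le_rfl (by linarith) le_rfl, hE]; ring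
  -- global bound
  have hbound : ∀ x ∈ Ioo (-1:ℝ) 1, |F x| ≤ l1 := by
    intro x hx
    obtain ⟨hx1, hx2⟩ := hx
    rcases le_or_gt x (-s) with h | h
    · have hle : F x ≤ 0 := by
        apply hnonpos _ _ (by linarith)
        intro u hu
        exact hgle u (by rw [abs_of_nonpos (by linarith [hu.2])]; linarith [hu.2])
      have hge : -l1 ≤ F x := by
        have hsplit : F (-s) = F x + ∫ t in x..(-s), g t :=
          (intervalIntegral.integral_add_adjacent_intervals (hgint _ _) (hgint _ _)).symm
        have : (∫ t in x..(-s), g t) ≤ 0 := by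
          apply hnonpos _ _ h
          intro u hu
          exact hgle u (by rw [abs_of_nonpos (by linarith [hu.2])]; linarith [hu.2])
        rw [hFns] at hsplit; linarith
      rw [abs_le]; constructor <;> linarith
    · rcases le_or_gt x s with h' | h'
      · have hge : -l1 ≤ F x := by
          have hsplit : F x = F (-s) + ∫ t in (-s)..x, g t :=
            (intervalIntegral.integral_add_adjacent_intervals (hgint _ _) (hgint _ _)).symm
          have : (0:ℝ) ≤ ∫ t in (-s)..x, g t := by
            apply intervalIntegral.integral_nonneg (by linarith)
            intro u hu
            exact hgge u (abs_le.mpr ⟨by linarith [hu.1], by linarith [hu.2]⟩)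
          rw [hsplit, hFns]; linarith
        have hle : F x ≤ l1 := by
          have hsplit : F s = F x + ∫ t in x..s, g t :=
            (intervalIntegral.integral_add_adjacent_intervals (hgint _ _) (hgint _ _)).symm
          have : (0:ℝ) ≤ ∫ t in x..s, g t := by
            apply intervalIntegral.integral_nonneg h'
            intro u hu
            exact hgge u (abs_le.mpr ⟨by linarith [hu.1], by linarith [hu.2]⟩)
          rw [hFs] at hsplit; linarith
        rw [abs_le]; constructor <;> linarith
      · have hle : F x ≤ l1 := by
          have hsplit : F x = F s + ∫ t in s..x, g t :=
            (intervalIntegral.integral_add_adjacent_intervals (hgint _ _) (hgint _ _)).symm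
          have : (∫ t in s..x, g t) ≤ 0 := by
            apply hnonpos _ _ (le_of_lt h')
            intro u hu
            exact hgle u (by rw [abs_of_nonneg (by linarith [hu.1])]; exact hu.1)
          rw [hsplit, hFs]; linarith
        have hge : -l1 ≤ F x := by
          have hsplit : F 1 = F x + ∫ t in x..1, g t :=
            (intervalIntegral.integral_add_adjacent_intervals (hgint _ _) (hgint _ _)).symm
          have : (∫ t in x..1, g t) ≤ 0 := by
            apply hnonpos _ _ (le_of_lt hx2)
            intro u hu
            exact hgle u (by rw [abs_of_nonneg (by linarith [hu.1])]; linarith [hu.1])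
          rw [hF1] at hsplit; linarith
        rw [abs_le]; constructor <;> linarith
  have hsig : ∀ x : ℝ, sig1 (fun t => vTrunc l1 t - (|t| - 1 / 2)) x = F x := by
    intro x; rfl
  have hFhalfneg : F (-(1 / 2)) = -l1 := hFval (-(1/2)) (by linarith) (by linarith)
  refine ⟨⟨⟨1/2, ⟨by norm_num, by norm_num⟩, ?_⟩, ?_⟩, ?_, ?_⟩
  · rw [hsig, hFhalf, abs_of_pos hl1]
  · rintro y ⟨x, hx, rfl⟩
    rw [hsig]
    exact hbound x hx
  · rw [hsig, hFhalf, abs_of_pos hl1]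
  · rw [hsig, hFhalfneg, abs_neg, abs_of_pos hl1]
end
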